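/- Let v be a C² vector field on a helical domain Ω ⊆ ℝ³ which is helical and divergence-free, with vorticity w = (w₁,w₂,w₃) = ∇×v, helical swirl v_ξ = v·ξ, orthogonal part u = v − v_ξ ξ/|ξ|², and ζ = (ζ₁,ζ₂,ζ₃) = ∇×u. Then pointwise on Ω: (i) w = (w₃/h) ξ + (1/h)(∂_{x₂}v_ξ, −∂_{x₁}v_ξ, 0), i.e. w₁ = (x₂ w₃ + ∂_{x₂}v_ξ)/h and w₂ = (−x₁ w₃ − ∂_{x₁}v_ξ)/h; and (ii) w₃ = ζ₃ − 2h² v_ξ/|ξ|⁴ − (x₁ ∂_{x₁}v_ξ + x₂ ∂_{x₂}v_ξ)/|ξ|². -/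

import Mathlib

/-!
Differentiating the symmetry `v (H_θ x) = Q_θ v x` at `θ = 0` gives
`(ξ · ∇) vᵢ = (v₂, -v₁, 0)ᵢ`; with the product rule for `∂ⱼ v_ξ` this expresses `h w₁` and
`h w₂` through `w₃` and `∇ v_ξ`. Part (ii) holds for every differentiable `v`: `v - u = g ξ`
with `g = v_ξ / |ξ|²`, the third component of `∇ × (g ξ)` is `-2g - (x₁ ∂₁g + x₂ ∂₂g)`,
and `∂ⱼ |ξ|² = 2 xⱼ` for `j = 1, 2`.
-/

noncomputable section

open Real

/-- ℝ³ as functions `Fin 3 → ℝ`. -/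
abbrev V3 := Fin 3 → ℝ

/-- Partial derivative `∂_{x_i} f` of a scalar function on ℝ³. -/
def pd3 (i : Fin 3) (f : V3 → ℝ) (x : V3) : ℝ := fderiv ℝ f x (Pi.single i 1)

/-- The helical transformation `H_θ(x) = Q_θ x + (0,0,hθ)`. -/
def Hmap (h θ : ℝ) (x : V3) : V3 :=
  ![x 0 * Real.cos θ + x 1 * Real.sin θ,
    -(x 0) * Real.sin θ + x 1 * Real.cos θ,
    x 2 + h * θ]

/-- The rotation `Q_θ = diag(R_θ, 1)` acting on vectors of ℝ³. -/
def Qrot (θ : ℝ) (v : V3) : V3 :=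
  ![v 0 * Real.cos θ + v 1 * Real.sin θ,
    -(v 0) * Real.sin θ + v 1 * Real.cos θ,
    v 2]

/-- The vector field `ξ(x) = (x₂, −x₁, h)`. -/
def xiVec (h : ℝ) (x : V3) : V3 := ![x 1, -(x 0), h]

/-- `|ξ(x)|² = h² + x₁² + x₂²`. -/
def xiNormSq (h : ℝ) (x : V3) : ℝ := h ^ 2 + (x 0) ^ 2 + (x 1) ^ 2

/-- The helical swirl `v_ξ = v ⋅ ξ`. -/
def swirl (h : ℝ) (v : V3 → V3) (x : V3) : ℝ := ∑ i : Fin 3, v x i * xiVec h x i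

/-- The orthogonal part `u = v − v_ξ ξ / |ξ|²` of a vector field `v`. -/
def orthPart (h : ℝ) (v : V3 → V3) (x : V3) : V3 :=
  fun i => v x i - swirl h v x * xiVec h x i / xiNormSq h x

/-- The curl `∇ × u` of a vector field on ℝ³. -/
def curl3 (u : V3 → V3) (x : V3) : V3 :=
  ![pd3 1 (fun y => u y 2) x - pd3 2 (fun y => u y 1) x,
    pd3 2 (fun y => u y 0) x - pd3 0 (fun y => u y 2) x,
    pd3 0 (fun y => u y 1) x - pd3 1 (fun y => u y 0) x]

section PartialDerivatives

variable {f g : V3 → ℝ} {x : V3} {j : Fin 3}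

lemma pd3_add (hf : DifferentiableAt ℝ f x) (hg : DifferentiableAt ℝ g x) :
    pd3 j (fun y => f y + g y) x = pd3 j f x + pd3 j g x := by
  simp [pd3, fderiv_fun_add hf hg]

lemma pd3_sub (hf : DifferentiableAt ℝ f x) (hg : DifferentiableAt ℝ g x) :
    pd3 j (fun y => f y - g y) x = pd3 j f x - pd3 j g x := by
  simp [pd3, fderiv_fun_sub hf hg]

lemma pd3_neg : pd3 j (fun y => -f y) x = -pd3 j f x := by
  simp [pd3]

lemma pd3_mul (hf : DifferentiableAt ℝ f x) (hg : DifferentiableAt ℝ g x) :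
    pd3 j (fun y => f y * g y) x = f x * pd3 j g x + g x * pd3 j f x := by
  simp [pd3, fderiv_fun_mul hf hg]

lemma pd3_const_mul (c : ℝ) (hf : DifferentiableAt ℝ f x) :
    pd3 j (fun y => c * f y) x = c * pd3 j f x := by
  simp [pd3, fderiv_const_mul hf]

lemma pd3_div (hf : DifferentiableAt ℝ f x) (hg : DifferentiableAt ℝ g x) (hgx : g x ≠ 0) :
    pd3 j (fun y => f y / g y) x = (g x * pd3 j f x - f x * pd3 j g x) / g x ^ 2 := by
  have hinv : pd3 j (fun y => (g y)⁻¹) x = -pd3 j g x / g x ^ 2 := by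
    rw [pd3, show (fun y => (g y)⁻¹) = (fun t : ℝ => t⁻¹) ∘ g from rfl,
      ((hasDerivAt_inv hgx).comp_hasFDerivAt x hg.hasFDerivAt).fderiv]
    simp [pd3, div_eq_mul_inv, mul_comm]
  simp only [div_eq_mul_inv]
  rw [pd3_mul (g := fun y => (g y)⁻¹) hf (hg.inv hgx), hinv]
  field_simp
  ring

lemma pd3_coord (i : Fin 3) : pd3 j (fun y => y i) x = if i = j then 1 else 0 := by
  simp [pd3, (hasFDerivAt_apply i x).fderiv, Pi.single_apply]

end PartialDerivatives

section Curl

variable {x : V3}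

lemma curl3_sub {u w : V3 → V3} (hu : ∀ i, DifferentiableAt ℝ (fun y => u y i) x)
    (hw : ∀ i, DifferentiableAt ℝ (fun y => w y i) x) :
    curl3 (fun y => u y - w y) x = curl3 u x - curl3 w x := by
  ext k
  fin_cases k <;> simp [curl3, pd3_sub (hu _) (hw _)] <;> ring

lemma curl3_smul_xiVec_two (h : ℝ) {g : V3 → ℝ} (hg : DifferentiableAt ℝ g x) :
    curl3 (fun y => g y • xiVec h y) x 2
      = -(2 * g x) - (x 0 * pd3 0 g x + x 1 * pd3 1 g x) := by
  simp [curl3, xiVec, pd3_neg, pd3_mul hg (differentiableAt_apply _ x), pd3_coord]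
  ring

end Curl

section Swirl

variable {h : ℝ} {v : V3 → V3} {x : V3}

lemma swirl_eq (h : ℝ) (v : V3 → V3) :
    swirl h v = fun y => v y 0 * y 1 - v y 1 * y 0 + h * v y 2 := by
  funext y
  simp [swirl, xiVec, Fin.sum_univ_three]
  ring

lemma differentiableAt_swirl (hd : ∀ i, DifferentiableAt ℝ (fun y => v y i) x) :
    DifferentiableAt ℝ (swirl h v) x := by
  rw [swirl_eq]
  have := hd 0; have := hd 1; have := hd 2
  fun_prop

lemma pd3_swirl (hd : ∀ i, DifferentiableAt ℝ (fun y => v y i) x) (j : Fin 3) :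
    pd3 j (swirl h v) x
      = x 1 * pd3 j (fun y => v y 0) x - x 0 * pd3 j (fun y => v y 1) x
        + h * pd3 j (fun y => v y 2) x
        + v x 0 * pd3 j (fun y => y 1) x - v x 1 * pd3 j (fun y => y 0) x := by
  have hcoord : ∀ i : Fin 3, DifferentiableAt ℝ (fun y : V3 => y i) x :=
    fun i => differentiableAt_apply i x
  rw [swirl_eq, pd3_add (((hd 0).fun_mul (hcoord 1)).fun_sub ((hd 1).fun_mul (hcoord 0)))
      ((hd 2).const_mul h), pd3_sub ((hd 0).fun_mul (hcoord 1)) ((hd 1).fun_mul (hcoord 0)),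
    pd3_mul (hd 0) (hcoord 1), pd3_mul (hd 1) (hcoord 0), pd3_const_mul h (hd 2)]
  ring

end Swirl

section OrthogonalPart

variable {h : ℝ} {v : V3 → V3} {x : V3}

lemma xiNormSq_pos (hh : h ≠ 0) (x : V3) : 0 < xiNormSq h x := by
  unfold xiNormSq
  positivity

lemma differentiableAt_xiNormSq : DifferentiableAt ℝ (xiNormSq h) x := by
  unfold xiNormSq
  fun_prop

lemma pd3_xiNormSq {j : Fin 3} (hj : j ≠ 2) : pd3 j (xiNormSq h) x = 2 * x j := by
  have hsq : ∀ i : Fin 3, pd3 j (fun y => y i ^ 2) x = 2 * x i * pd3 j (fun y => y i) x := by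
    intro i
    simp only [sq, pd3_mul (differentiableAt_apply i x) (differentiableAt_apply i x)]
    ring
  unfold xiNormSq
  rw [pd3_add (by fun_prop) (by fun_prop), pd3_add (by fun_prop) (by fun_prop), hsq, hsq,
    pd3_coord, pd3_coord]
  fin_cases j <;> simp_all [pd3]

lemma orthPart_eq_sub_smul_xiVec (h : ℝ) (v : V3 → V3) :
    orthPart h v = fun y => v y - (swirl h v y / xiNormSq h y) • xiVec h y := by
  funext y i
  simp [orthPart]
  ring

lemma curl3_two_eq_orthPart (hh : h ≠ 0) (hd : ∀ i, DifferentiableAt ℝ (fun y => v y i) x) :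
    curl3 v x 2 = curl3 (orthPart h v) x 2
      - 2 * h ^ 2 * swirl h v x / (xiNormSq h x) ^ 2
      - (x 0 * pd3 0 (swirl h v) x + x 1 * pd3 1 (swirl h v) x) / xiNormSq h x := by
  have hN := (xiNormSq_pos hh x).ne'
  have hs : DifferentiableAt ℝ (swirl h v) x := differentiableAt_swirl hd
  have hg : DifferentiableAt ℝ (fun y => swirl h v y / xiNormSq h y) x := by
    simp only [div_eq_mul_inv]
    exact hs.mul (differentiableAt_xiNormSq.inv hN)
  have hgξ : ∀ i, DifferentiableAt ℝ
      (fun y => ((swirl h v y / xiNormSq h y) • xiVec h y) i) x := by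
    intro i
    fin_cases i <;> simp [xiVec] <;> fun_prop
  have hpd : ∀ j : Fin 3, j ≠ 2 → pd3 j (fun y => swirl h v y / xiNormSq h y) x
      = (xiNormSq h x * pd3 j (swirl h v) x - swirl h v x * (2 * x j)) / xiNormSq h x ^ 2 :=
    fun j hj => by
      rw [pd3_div hs differentiableAt_xiNormSq hN, pd3_xiNormSq hj]
  rw [orthPart_eq_sub_smul_xiVec, curl3_sub hd hgξ, Pi.sub_apply, curl3_smul_xiVec_two h hg,
    hpd 0 (by decide), hpd 1 (by decide)]
  unfold xiNormSq at hN ⊢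
  field_simp
  ring

end OrthogonalPart

section Helical

variable {h : ℝ} {v : V3 → V3} {x : V3}

lemma Hmap_zero (h : ℝ) (x : V3) : Hmap h 0 x = x := by
  funext k
  fin_cases k <;> simp [Hmap]

lemma hasDerivAt_Hmap_zero (h : ℝ) (x : V3) :
    HasDerivAt (fun θ => Hmap h θ x) (xiVec h x) 0 := by
  rw [hasDerivAt_pi]
  intro k
  fin_cases k
  · simpa [Hmap, xiVec] using
      ((hasDerivAt_cos 0).const_mul (x 0)).fun_add ((hasDerivAt_sin 0).const_mul (x 1))
  · simpa [Hmap, xiVec] using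
      ((hasDerivAt_sin 0).const_mul (-x 0)).fun_add ((hasDerivAt_cos 0).const_mul (x 1))
  · simpa [Hmap, xiVec] using ((hasDerivAt_id (0 : ℝ)).const_mul h).const_add (x 2)

lemma hasDerivAt_Qrot_zero (w : V3) :
    HasDerivAt (fun θ => Qrot θ w) ![w 1, -w 0, 0] 0 := by
  rw [hasDerivAt_pi]
  intro k
  fin_cases k
  · simpa [Qrot] using
      ((hasDerivAt_cos 0).const_mul (w 0)).fun_add ((hasDerivAt_sin 0).const_mul (w 1))
  · simpa [Qrot] using
      ((hasDerivAt_sin 0).const_mul (-w 0)).fun_add ((hasDerivAt_cos 0).const_mul (w 1))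
  · simpa [Qrot] using hasDerivAt_const (0 : ℝ) (w 2)

lemma fderiv_apply_xiVec (h : ℝ) (f : V3 → ℝ) (x : V3) :
    fderiv ℝ f x (xiVec h x) = x 1 * pd3 0 f x - x 0 * pd3 1 f x + h * pd3 2 f x := by
  have hξ : xiVec h x
      = x 1 • Pi.single 0 1 + (-x 0) • Pi.single 1 1 + h • Pi.single 2 1 := by
    funext k
    fin_cases k <;> simp [xiVec]
  rw [hξ]
  simp only [map_add, map_smul, smul_eq_mul, pd3]
  ring

lemma pd3_along_xiVec_of_helical (i : Fin 3) (hdi : DifferentiableAt ℝ (fun y => v y i) x)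
    (hrot : ∀ θ, v (Hmap h θ x) = Qrot θ (v x)) :
    x 1 * pd3 0 (fun y => v y i) x - x 0 * pd3 1 (fun y => v y i) x
      + h * pd3 2 (fun y => v y i) x = ![v x 1, -v x 0, 0] i := by
  have hchain : HasDerivAt (fun θ => v (Hmap h θ x) i)
      (fderiv ℝ (fun y => v y i) x (xiVec h x)) 0 :=
    hdi.hasFDerivAt.comp_hasDerivAt_of_eq 0 (hasDerivAt_Hmap_zero h x) (Hmap_zero h x).symm
  simp only [hrot] at hchain
  rw [← fderiv_apply_xiVec]
  exact hchain.unique ((hasDerivAt_pi.mp (hasDerivAt_Qrot_zero (v x))) i)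

lemma mul_curl3_zero_of_helical (hd : ∀ i, DifferentiableAt ℝ (fun y => v y i) x)
    (hrot : ∀ θ, v (Hmap h θ x) = Qrot θ (v x)) :
    h * curl3 v x 0 = x 1 * curl3 v x 2 + pd3 1 (swirl h v) x := by
  have hv1 := pd3_along_xiVec_of_helical 1 (hd 1) hrot
  simp [curl3, pd3_swirl hd, pd3_coord] at hv1 ⊢
  linear_combination -hv1

lemma mul_curl3_one_of_helical (hd : ∀ i, DifferentiableAt ℝ (fun y => v y i) x)
    (hrot : ∀ θ, v (Hmap h θ x) = Qrot θ (v x)) :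
    h * curl3 v x 1 = -x 0 * curl3 v x 2 - pd3 0 (swirl h v) x := by
  have hv0 := pd3_along_xiVec_of_helical 0 (hd 0) hrot
  simp [curl3, pd3_swirl hd, pd3_coord] at hv0 ⊢
  linear_combination hv0

end Helical

theorem vorticity_decomposition_general (h : ℝ) (hh : 0 < h) (Ω : Set V3) (hΩopen : IsOpen Ω)
    (v : V3 → V3) (hv : ∀ i : Fin 3, ContDiffOn ℝ 2 (fun x => v x i) Ω)
    (hhel : ∀ θ : ℝ, ∀ x ∈ Ω, v (Hmap h θ x) = Qrot θ (v x)) :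
    ∀ x ∈ Ω,
      curl3 v x 0 = (x 1 * curl3 v x 2 + pd3 1 (swirl h v) x) / h ∧
      curl3 v x 1 = (-(x 0) * curl3 v x 2 - pd3 0 (swirl h v) x) / h ∧
      curl3 v x 2 = curl3 (orthPart h v) x 2
          - 2 * h ^ 2 * swirl h v x / (xiNormSq h x) ^ 2
          - (x 0 * pd3 0 (swirl h v) x + x 1 * pd3 1 (swirl h v) x) / xiNormSq h x := by
  intro x hx
  have hd : ∀ i, DifferentiableAt ℝ (fun y => v y i) x := fun i =>
    ((hv i).contDiffAt (hΩopen.mem_nhds hx)).differentiableAt (by norm_num)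
  have hrot : ∀ θ, v (Hmap h θ x) = Qrot θ (v x) := fun θ => hhel θ x hx
  refine ⟨?_, ?_, curl3_two_eq_orthPart hh.ne' hd⟩
  · rw [eq_div_iff hh.ne', mul_comm]
    exact mul_curl3_zero_of_helical hd hrot
  · rw [eq_div_iff hh.ne', mul_comm]
    exact mul_curl3_one_of_helical hd hrot

/-- For a helical divergence-free C² vector field `v` with vorticity `w = ∇×v`,
swirl `v_ξ`, orthogonal part `u` and `ζ = ∇×u`, one has
`w = (w₃/h) ξ + (1/h)(∂₂v_ξ, −∂₁v_ξ, 0)` and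
`w₃ = ζ₃ − 2h²v_ξ/|ξ|⁴ − (x₁∂₁v_ξ + x₂∂₂v_ξ)/|ξ|²` on `Ω`. -/
theorem vorticity_decomposition (h : ℝ) (hh : 0 < h) (Ω : Set V3) (hΩopen : IsOpen Ω)
    (hΩ : ∀ θ : ℝ, Hmap h θ '' Ω = Ω)
    (v : V3 → V3) (hv : ∀ i : Fin 3, ContDiffOn ℝ 2 (fun x => v x i) Ω)
    (hhel : ∀ θ : ℝ, ∀ x ∈ Ω, v (Hmap h θ x) = Qrot θ (v x))
    (hdiv : ∀ x ∈ Ω, ∑ i : Fin 3, pd3 i (fun y => v y i) x = 0) :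
    ∀ x ∈ Ω,
      curl3 v x 0 = (x 1 * curl3 v x 2 + pd3 1 (swirl h v) x) / h ∧
      curl3 v x 1 = (-(x 0) * curl3 v x 2 - pd3 0 (swirl h v) x) / h ∧
      curl3 v x 2 = curl3 (orthPart h v) x 2
          - 2 * h ^ 2 * swirl h v x / (xiNormSq h x) ^ 2
          - (x 0 * pd3 0 (swirl h v) x + x 1 * pd3 1 (swirl h v) x) / xiNormSq h x :=
  vorticity_decomposition_general h hh Ω hΩopen v hv hhel
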